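/- Let P be a partial latin square of order n whose filled cells are exactly those of the upper-left r×s rectangle. Then P is completable to a latin square of order n if and only if P satisfies Hall's Condition. Equivalently, Hall's Condition for such P is equivalent to Ryser's Condition ν(σ) ≥ r+s−n for all symbols σ. -/

import Mathlib

open scoped Classical

section PLS

variable {n : ℕ}

/-- A partial latin square of order `n`: an `n × n` array of optional symbols,
no symbol occurring twice in any row or column. -/
def IsPLS (n : ℕ) (P : Fin n → Fin n → Option (Fin n)) : Prop :=
  (∀ i j j' σ, P i j = some σ → P i j' = some σ → j = j') ∧
  (∀ i i' j σ, P i j = some σ → P i' j = some σ → i = i')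

/-- `σ` is missing from row `i`. -/
def MissingRow (P : Fin n → Fin n → Option (Fin n)) (σ i : Fin n) : Prop :=
  ∀ j, P i j ≠ some σ

/-- `σ` is missing from column `j`. -/
def MissingCol (P : Fin n → Fin n → Option (Fin n)) (σ j : Fin n) : Prop :=
  ∀ i, P i j ≠ some σ

/-- A cell supports `σ` if it contains `σ`, or is empty and `σ` is missing from
its row and column. -/
def Supports (P : Fin n → Fin n → Option (Fin n)) (σ : Fin n) (c : Fin n × Fin n) : Prop :=
  P c.1 c.2 = some σ ∨ (P c.1 c.2 = none ∧ MissingRow P σ c.1 ∧ MissingCol P σ c.2)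

/-- A set of cells is independent if no two share a row or a column. -/
def IndepCells (S : Finset (Fin n × Fin n)) : Prop :=
  ∀ c ∈ S, ∀ c' ∈ S, c ≠ c' → c.1 ≠ c'.1 ∧ c.2 ≠ c'.2

/-- `alpha P σ T` : max size of an independent subset of `T` all of whose cells support `σ`. -/
noncomputable def alpha (P : Fin n → Fin n → Option (Fin n)) (σ : Fin n)
    (T : Finset (Fin n × Fin n)) : ℕ :=
  (T.powerset.filter (fun S => IndepCells S ∧ ∀ c ∈ S, Supports P σ c)).sup Finset.card

/-- Hall's Condition: every set of cells satisfies the Hall Inequality. -/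
def HallCond (n : ℕ) (P : Fin n → Fin n → Option (Fin n)) : Prop :=
  ∀ T : Finset (Fin n × Fin n), T.card ≤ ∑ σ : Fin n, alpha P σ T

/-- A latin square of order `n`. -/
def IsLatin (n : ℕ) (L : Fin n → Fin n → Fin n) : Prop :=
  (∀ i, Function.Injective (L i)) ∧ (∀ j, Function.Injective fun i => L i j)

/-- `L` is a completion of `P`. -/
def Completes (n : ℕ) (P : Fin n → Fin n → Option (Fin n)) (L : Fin n → Fin n → Fin n) : Prop :=
  IsLatin n L ∧ ∀ i j σ, P i j = some σ → L i j = σ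

end PLS

/-!
A completion satisfies Hall's Condition: the cells of `T` that a latin square fills with `σ` form
an independent set supporting `σ`.

Hall's Condition implies Ryser's: test it on the empty block `T` formed by the first `r` rows and
the last `n - s` columns. A symbol `τ` is supported there by at most `r - ν(τ)` independent cells
(one per row of the block missing `τ`) and by at most `n - s` (one per column), while
`∑ τ, (r - ν(τ)) = r (n - s) = |T|`, so `r - ν(τ) ≤ n - s` for every `τ`.

Ryser's Condition implies completability: it says that in the bipartite graph joining each of the
first `r` rows to the symbols it misses, rows have degree `n - s` and symbols degree at most
`n - s`. A matching covering the rows and all symbols of degree `n - s` fills column `s + 1` and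
preserves Ryser's Condition. Once the first `r` rows are full, transpose and fill the other rows
the same way.
-/

open Finset

section Matching

variable {α β : Type*} [Fintype β] (R : Finset α) (M : α → β → Prop) {d : ℕ}

theorem card_le_card_biUnion_of_degree_bounds (hd : 0 < d) (hrow : ∀ i ∈ R, #{τ | M i τ} = d)
    (hsym : ∀ τ, #{i ∈ R | M i τ} ≤ d) {S : Finset α} (hSR : S ⊆ R) :
    #S ≤ #(S.biUnion fun i => {τ | M i τ}) := by
  refine Nat.le_of_mul_le_mul_right (card_mul_le_card_mul M (m := d) (n := d) ?_ ?_) hd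
  · intro i hi
    rw [← hrow i (hSR hi)]
    refine card_le_card fun τ hτ => mem_filter.2 ⟨mem_biUnion.2 ⟨i, hi, hτ⟩, (mem_filter.1 hτ).2⟩
  · exact fun τ _ => (card_le_card (filter_subset_filter _ hSR)).trans (hsym τ)

theorem card_maxDegree_sdiff_le (hd : 0 < d) (hrow : ∀ i ∈ R, #{τ | M i τ} = d)
    {W : Finset α} {N : Finset β} (hN : ∀ i ∈ W, ∀ τ, M i τ → τ ∈ N) :
    #(({τ | #{i ∈ R | M i τ} = d} : Finset β) \ N) ≤ #(R \ W) := by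
  refine Nat.le_of_mul_le_mul_right
    (card_mul_le_card_mul (fun τ i => M i τ) (m := d) (n := d) ?_ ?_) hd
  · intro τ hτ
    obtain ⟨hτF, hτN⟩ := mem_sdiff.1 hτ
    rw [← (mem_filter.1 hτF).2]
    refine card_le_card fun i hi => ?_
    obtain ⟨hiR, hiτ⟩ := mem_filter.1 hi
    exact mem_filter.2 ⟨mem_sdiff.2 ⟨hiR, fun hiW => hτN (hN i hiW τ hiτ)⟩, hiτ⟩
  · intro i hi
    rw [← hrow i (mem_sdiff.1 hi).1]
    exact card_le_card (filter_subset_filter _ (subset_univ _))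

/-- Padding `R` with dummy vertices that may only be matched to symbols of degree below `d`,
Hall's theorem yields a perfect matching, which must match every symbol of degree `d` into `R`. -/
theorem exists_matching_covering_maxDegree [Fintype α] (hcard : Fintype.card α = Fintype.card β)
    (hd : 0 < d) (hrow : ∀ i ∈ R, #{τ | M i τ} = d) (hsym : ∀ τ, #{i ∈ R | M i τ} ≤ d) :
    ∃ f : α → β, Set.InjOn f R ∧ (∀ i ∈ R, M i (f i)) ∧
      ∀ τ, #{i ∈ R | M i τ} = d → ∃ i ∈ R, f i = τ := by
  set F : Finset β := {τ | #{i ∈ R | M i τ} = d}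
  let t : α → Finset β := fun i => if i ∈ R then ({τ | M i τ} : Finset β) else Fᶜ
  have hall : ∀ S : Finset α, #S ≤ #(S.biUnion t) := by
    intro S
    by_cases hSR : S ⊆ R
    · have : S.biUnion t = S.biUnion fun i => ({τ | M i τ} : Finset β) :=
        biUnion_congr rfl fun i hi => if_pos (hSR hi)
      rw [this]
      exact card_le_card_biUnion_of_degree_bounds R M hd hrow hsym hSR
    obtain ⟨i₀, hi₀S, hi₀R⟩ := not_subset.1 hSR
    set W := S.filter (· ∈ R)
    have hN : ∀ i ∈ W, ∀ τ, M i τ → τ ∈ S.biUnion t := fun i hi τ hτ =>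
      mem_biUnion.2 ⟨i, (mem_filter.1 hi).1, by simpa [t, (mem_filter.1 hi).2] using hτ⟩
    have hcover : (univ : Finset β) ⊆ (F \ S.biUnion t) ∪ S.biUnion t := fun τ _ => by
      by_cases hτ : τ ∈ S.biUnion t
      · exact mem_union_right _ hτ
      · refine mem_union_left _ (mem_sdiff.2 ⟨?_, hτ⟩)
        by_contra hτF
        exact hτ (mem_biUnion.2 ⟨i₀, hi₀S, by simp [t, hi₀R, hτF]⟩)
    have hWR : W ⊆ R := fun i hi => (mem_filter.1 hi).2
    have h₁ : #(F \ S.biUnion t) ≤ #R - #W := by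
      rw [← card_sdiff_of_subset hWR]
      exact card_maxDegree_sdiff_le R M hd hrow hN
    have h₂ : Fintype.card β ≤ #(F \ S.biUnion t) + #(S.biUnion t) :=
      (card_le_card hcover).trans (card_union_le _ _)
    have h₃ : #(S.filter (· ∉ R)) ≤ Fintype.card α - #R := by
      rw [← card_compl]
      exact card_le_card fun i hi => mem_compl.2 (mem_filter.1 hi).2
    have h₄ : #W + #(S.filter (· ∉ R)) = #S := card_filter_add_card_filter_not _
    have := card_le_card hWR
    have := card_le_univ R
    omega
  obtain ⟨f, hinj, hf⟩ := (all_card_le_biUnion_card_iff_exists_injective t).1 hall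
  refine ⟨f, hinj.injOn, fun i hi => by simpa [t, hi] using hf i, fun τ hτ => ?_⟩
  obtain ⟨i, rfl⟩ := ((Fintype.bijective_iff_injective_and_card f).2 ⟨hinj, hcard⟩).2 τ
  by_cases hi : i ∈ R
  · exact ⟨i, hi, rfl⟩
  · simpa [t, hi, F, hτ] using hf i

end Matching

section PartialLatinSquare

variable {n : ℕ}

def IsRectShape (r s : ℕ) (P : Fin n → Fin n → Option (Fin n)) : Prop :=
  ∀ i j : Fin n, P i j ≠ none ↔ (i.val < r ∧ j.val < s)

noncomputable def symbolCount (P : Fin n → Fin n → Option (Fin n)) (σ : Fin n) : ℕ :=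
  #{c : Fin n × Fin n | P c.1 c.2 = some σ}

def RyserCond (r s : ℕ) (P : Fin n → Fin n → Option (Fin n)) : Prop :=
  ∀ σ, r + s ≤ n + symbolCount P σ

def Extends (P Q : Fin n → Fin n → Option (Fin n)) : Prop :=
  ∀ i j σ, P i j = some σ → Q i j = some σ

def firstIndices (r : ℕ) : Finset (Fin n) := {i | i.val < r}

@[simp]
lemma mem_firstIndices {r : ℕ} {i : Fin n} : i ∈ firstIndices r ↔ i.val < r := by
  simp [firstIndices]

lemma card_firstIndices {r : ℕ} (h : r ≤ n) : #(firstIndices (n := n) r) = r := by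
  rw [firstIndices, Fin.card_filter_val_lt, min_eq_right h]

lemma card_eq_of_bijective_rel {α β : Type*} {s : Finset α} {t : Finset β}
    (rel : α → β → Prop) (hs : ∀ a ∈ s, ∃ b ∈ t, rel a b) (ht : ∀ b ∈ t, ∃ a ∈ s, rel a b)
    (hfun : ∀ a ∈ s, ∀ b ∈ t, ∀ b' ∈ t, rel a b → rel a b' → b = b')
    (hinj : ∀ b ∈ t, ∀ a ∈ s, ∀ a' ∈ s, rel a b → rel a' b → a = a') :
    #s = #t :=
  le_antisymm
    (card_le_card_of_forall_subsingleton rel hs fun b hb a ha a' ha' =>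
      hinj b hb a ha.1 a' ha'.1 ha.2 ha'.2)
    (card_le_card_of_forall_subsingleton (fun b a => rel a b) ht fun a ha b hb b' hb' =>
      hfun a ha b hb.1 b' hb'.1 hb.2 hb'.2)

variable {P Q : Fin n → Fin n → Option (Fin n)} {r s : ℕ}

lemma IsPLS.card_not_missingRow (hP : IsPLS n P) (i : Fin n) :
    #{τ | ¬MissingRow P τ i} = #{j | P i j ≠ none} := by
  refine card_eq_of_bijective_rel (fun τ j => P i j = some τ) ?_ ?_ ?_ ?_
  · intro τ hτ
    obtain ⟨j, hj⟩ : ∃ j, P i j = some τ := by simpa [MissingRow] using hτ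
    exact ⟨j, by simp [hj], hj⟩
  · intro j hj
    obtain ⟨τ, hτ⟩ := Option.ne_none_iff_exists'.1 (mem_filter.1 hj).2
    exact ⟨τ, by simpa [MissingRow] using ⟨j, hτ⟩, hτ⟩
  · exact fun τ _ j _ j' _ h h' => hP.1 i j j' τ h h'
  · exact fun j _ τ _ τ' _ h h' => Option.some_injective _ (h.symm.trans h')

lemma IsPLS.symbolCount_eq (hP : IsPLS n P) (σ : Fin n) :
    symbolCount P σ = #{i | ¬MissingRow P σ i} := by
  refine card_eq_of_bijective_rel (fun c i => c.1 = i) ?_ ?_ ?_ ?_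
  · exact fun c hc => ⟨c.1, by simpa [MissingRow] using ⟨c.2, (mem_filter.1 hc).2⟩, rfl⟩
  · intro i hi
    obtain ⟨j, hj⟩ : ∃ j, P i j = some σ := by simpa [MissingRow] using hi
    exact ⟨(i, j), by simpa using hj, rfl⟩
  · exact fun c _ i _ i' _ h h' => h.symm.trans h'
  · intro i _ c hc c' hc' h h'
    have hrow : c.1 = c'.1 := h.trans h'.symm
    refine Prod.ext hrow (hP.1 c.1 c.2 c'.2 σ (mem_filter.1 hc).2 ?_)
    rw [hrow]
    exact (mem_filter.1 hc').2

lemma IsPLS.card_missingRow (hP : IsPLS n P) (hshape : IsRectShape r s P) (hsn : s ≤ n)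
    {i : Fin n} (hi : i.val < r) : #{τ | MissingRow P τ i} = n - s := by
  have hsplit : #{τ | MissingRow P τ i} + #{τ | ¬MissingRow P τ i} = n := by
    rw [card_filter_add_card_filter_not, card_univ, Fintype.card_fin]
  have hfilled : #{τ | ¬MissingRow P τ i} = s := by
    rw [hP.card_not_missingRow, ← card_firstIndices hsn, firstIndices]
    simp only [hshape i, hi, true_and]
  omega

lemma IsPLS.card_missingRow_add_symbolCount (hP : IsPLS n P) (hshape : IsRectShape r s P)
    (hrn : r ≤ n) (σ : Fin n) :
    #{i ∈ firstIndices r | MissingRow P σ i} + symbolCount P σ = r := by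
  have hrows : #{i | ¬MissingRow P σ i} = #{i ∈ firstIndices r | ¬MissingRow P σ i} := by
    congr 1
    ext i
    simp only [firstIndices, mem_filter, mem_univ, true_and, iff_and_self]
    intro hi
    obtain ⟨j, hj⟩ : ∃ j, P i j = some σ := by simpa [MissingRow] using hi
    exact ((hshape i j).1 (by simp [hj])).1
  rw [hP.symbolCount_eq, hrows, card_filter_add_card_filter_not, card_firstIndices hrn]

lemma IsPLS.ryserCond_iff (hP : IsPLS n P) (hshape : IsRectShape r s P) (hrn : r ≤ n)
    (hsn : s ≤ n) :
    RyserCond r s P ↔ ∀ σ, #{i ∈ firstIndices r | MissingRow P σ i} ≤ n - s :=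
  forall_congr' fun σ => by
    have := hP.card_missingRow_add_symbolCount hshape hrn σ
    omega

lemma IsPLS.swap (hP : IsPLS n P) : IsPLS n (Function.swap P) :=
  ⟨fun i j j' σ h h' => hP.2 j j' i σ h h', fun i i' j σ h h' => hP.1 j i i' σ h h'⟩

lemma IsRectShape.swap (h : IsRectShape r s P) : IsRectShape s r (Function.swap P) :=
  fun i j => (h j i).trans and_comm

lemma symbolCount_swap (σ : Fin n) : symbolCount (Function.swap P) σ = symbolCount P σ :=
  card_equiv (Equiv.prodComm _ _) fun c => by simp [Function.swap]

lemma RyserCond.swap (h : RyserCond r s P) : RyserCond s r (Function.swap P) := fun σ => by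
  rw [symbolCount_swap, add_comm s r]
  exact h σ

lemma Extends.trans {R : Fin n → Fin n → Option (Fin n)} (hPQ : Extends P Q)
    (hQR : Extends Q R) : Extends P R :=
  fun i j σ h => hQR i j σ (hPQ i j σ h)

lemma Extends.symbolCount_le (h : Extends P Q) (σ : Fin n) :
    symbolCount P σ ≤ symbolCount Q σ :=
  card_le_card fun _ hc => mem_filter.2 ⟨mem_univ _, h _ _ _ (mem_filter.1 hc).2⟩

lemma Extends.symbolCount_lt (h : Extends P Q) {i j σ : Fin n} (hP : P i j ≠ some σ)
    (hQ : Q i j = some σ) : symbolCount P σ < symbolCount Q σ := by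
  refine card_lt_card ((ssubset_iff_of_subset ?_).2 ⟨(i, j), ?_, ?_⟩)
  · exact fun _ hc => mem_filter.2 ⟨mem_univ _, h _ _ _ (mem_filter.1 hc).2⟩
  · simpa using hQ
  · simpa using hP

def extendColumn (P : Fin n → Fin n → Option (Fin n)) (r s : ℕ) (f : Fin n → Fin n) :
    Fin n → Fin n → Option (Fin n) :=
  fun i j => if j.val = s ∧ i.val < r then some (f i) else P i j

variable {f : Fin n → Fin n}

lemma extends_extendColumn (hshape : IsRectShape r s P) : Extends P (extendColumn P r s f) := by
  intro i j σ h
  have hj := ((hshape i j).1 (by simp [h])).2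
  simp [extendColumn, hj.ne, h]

lemma IsRectShape.extendColumn (hshape : IsRectShape r s P) :
    IsRectShape r (s + 1) (extendColumn P r s f) := by
  intro i j
  unfold _root_.extendColumn
  split_ifs with h
  · simp only [ne_eq, reduceCtorEq, not_false_eq_true, true_iff]
    omega
  · rw [hshape i j]
    omega

lemma IsPLS.extendColumn (hP : IsPLS n P) (hshape : IsRectShape r s P)
    (hinj : Set.InjOn f ↑(firstIndices (n := n) r))
    (hmiss : ∀ i ∈ firstIndices r, MissingRow P (f i) i) :
    IsPLS n (extendColumn P r s f) := by
  have hold : ∀ {i j σ}, P i j = some σ → j.val < s := fun {i j σ} h =>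
    ((hshape i j).1 (by simp [h])).2
  constructor
  · intro i j j' σ h h'
    unfold _root_.extendColumn at h h'
    split_ifs at h h' with hj hj' hj'
    · exact Fin.ext (hj.1.trans hj'.1.symm)
    · cases h; exact absurd h' (hmiss i (mem_firstIndices.2 hj.2) j')
    · cases h'; exact absurd h (hmiss i (mem_firstIndices.2 hj'.2) j)
    · exact hP.1 i j j' σ h h'
  · intro i i' j σ h h'
    unfold _root_.extendColumn at h h'
    split_ifs at h h' with hi hi' hi'
    · exact hinj (mem_firstIndices.2 hi.2) (mem_firstIndices.2 hi'.2)
        (Option.some_injective _ (h.trans h'.symm))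
    · have := hold h'; omega
    · have := hold h; omega
    · exact hP.2 i i' j σ h h'

theorem exists_extends_addColumn (hP : IsPLS n P) (hshape : IsRectShape r s P)
    (hRy : RyserCond r s P) (hrn : r ≤ n) (hsn : s < n) :
    ∃ Q, IsPLS n Q ∧ IsRectShape r (s + 1) Q ∧ RyserCond r (s + 1) Q ∧ Extends P Q := by
  have hdeg := (hP.ryserCond_iff hshape hrn hsn.le).1 hRy
  obtain ⟨f, hinj, hmiss, hcover⟩ := exists_matching_covering_maxDegree (firstIndices r)
    (fun i τ => MissingRow P τ i) (by simp) (by omega : 0 < n - s)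
    (fun i hi => hP.card_missingRow hshape hsn.le (mem_firstIndices.1 hi)) hdeg
  have hext : Extends P (extendColumn P r s f) := extends_extendColumn hshape
  refine ⟨extendColumn P r s f, hP.extendColumn hshape hinj hmiss, hshape.extendColumn, ?_, hext⟩
  intro σ
  have hcount := hP.card_missingRow_add_symbolCount hshape hrn σ
  have hle := hext.symbolCount_le σ
  obtain hlt | heq := (hdeg σ).lt_or_eq
  · omega
  · obtain ⟨i, hi, rfl⟩ := hcover _ heq
    have hi' : i.val < r := mem_firstIndices.1 hi
    have hempty : P i ⟨s, hsn⟩ = none := by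
      by_contra h
      exact absurd ((hshape i _).1 h).2 (lt_irrefl s)
    have hnew := hext.symbolCount_lt (i := i) (j := ⟨s, hsn⟩) (σ := f i) (by simp [hempty])
      (by simp [extendColumn, hi'])
    omega

theorem exists_extends_fullWidth (hP : IsPLS n P) (hshape : IsRectShape r s P)
    (hRy : RyserCond r s P) (hrn : r ≤ n) (hsn : s ≤ n) :
    ∃ Q, IsPLS n Q ∧ IsRectShape r n Q ∧ RyserCond r n Q ∧ Extends P Q := by
  obtain ⟨k, hk⟩ := Nat.exists_eq_add_of_le hsn
  induction k generalizing P s with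
  | zero => exact ⟨P, hP, hk ▸ hshape, hk ▸ hRy, fun _ _ _ => id⟩
  | succ k ih =>
    obtain ⟨Q, hQ, hQshape, hQRy, hPQ⟩ := exists_extends_addColumn hP hshape hRy hrn (by omega)
    obtain ⟨R, hR, hRshape, hRRy, hQR⟩ := ih hQ hQshape hQRy (by omega) (by omega)
    exact ⟨R, hR, hRshape, hRRy, hPQ.trans hQR⟩

theorem exists_completes_of_extends (hQ : IsPLS n Q) (hshape : IsRectShape n n Q)
    (hPQ : Extends P Q) : ∃ L, Completes n P L := by
  have hfull : ∀ i j, ∃ σ, Q i j = some σ := fun i j =>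
    Option.ne_none_iff_exists'.1 ((hshape i j).2 ⟨i.2, j.2⟩)
  choose L hL using hfull
  refine ⟨L, ⟨fun i j j' h => hQ.1 i j j' _ (hL i j) (h ▸ hL i j'), fun j i i' h => ?_⟩,
    fun i j σ h => Option.some_injective _ ((hL i j).symm.trans (hPQ i j σ h))⟩
  exact hQ.2 i i' j _ (hL i j) (by rw [show L i j = L i' j from h]; exact hL i' j)

theorem exists_completes_of_ryserCond (hP : IsPLS n P) (hshape : IsRectShape r s P)
    (hRy : RyserCond r s P) (hrn : r ≤ n) (hsn : s ≤ n) : ∃ L, Completes n P L := by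
  obtain ⟨Q, hQ, hQshape, hQRy, hPQ⟩ := exists_extends_fullWidth hP hshape hRy hrn hsn
  obtain ⟨R, hR, hRshape, -, hQR⟩ :=
    exists_extends_fullWidth hQ.swap hQshape.swap hQRy.swap le_rfl hrn
  exact exists_completes_of_extends hR.swap hRshape.swap fun i j σ h => hQR j i σ (hPQ i j σ h)

section Hall

variable {σ : Fin n} {S T : Finset (Fin n × Fin n)}

lemma le_alpha (hST : S ⊆ T) (hS : IndepCells S) (hσ : ∀ c ∈ S, Supports P σ c) :
    #S ≤ alpha P σ T :=
  le_sup (f := card) (mem_filter.2 ⟨mem_powerset.2 hST, hS, hσ⟩)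

lemma alpha_le {m : ℕ}
    (h : ∀ S ⊆ T, IndepCells S → (∀ c ∈ S, Supports P σ c) → #S ≤ m) : alpha P σ T ≤ m :=
  Finset.sup_le fun S hS => by
    obtain ⟨hST, hS, hσ⟩ := mem_filter.1 hS
    exact h S (mem_powerset.1 hST) hS hσ

lemma IndepCells.card_le_of_fst_mem (hS : IndepCells S) {A : Finset (Fin n)}
    (h : ∀ c ∈ S, c.1 ∈ A) : #S ≤ #A :=
  card_le_card_of_injOn Prod.fst h fun c hc c' hc' hcc =>
    by_contra fun hne => (hS c hc c' hc' hne).1 hcc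

lemma IndepCells.card_le_of_snd_mem (hS : IndepCells S) {A : Finset (Fin n)}
    (h : ∀ c ∈ S, c.2 ∈ A) : #S ≤ #A :=
  card_le_card_of_injOn Prod.snd h fun c hc c' hc' hcc =>
    by_contra fun hne => (hS c hc c' hc' hne).2 hcc

variable {L : Fin n → Fin n → Fin n}

lemma IsLatin.indepCells_filter (hL : IsLatin n L) (T : Finset (Fin n × Fin n)) (σ : Fin n) :
    IndepCells (T.filter fun c => L c.1 c.2 = σ) := by
  intro c hc c' hc' hne
  have hσ : L c.1 c.2 = L c'.1 c'.2 := (mem_filter.1 hc).2.trans (mem_filter.1 hc').2.symm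
  constructor
  · intro h1
    exact hne (Prod.ext h1 (hL.1 c.1 (by rw [hσ, h1])))
  · intro h2
    exact hne (Prod.ext (hL.2 c.2 (show L c.1 c.2 = L c'.1 c.2 by rw [hσ, h2])) h2)

lemma Completes.supports (hL : Completes n P L) (c : Fin n × Fin n) :
    Supports P (L c.1 c.2) c := by
  rcases h : P c.1 c.2 with _ | τ
  · refine Or.inr ⟨h, fun j hj => ?_, fun i hi => ?_⟩
    · have : j = c.2 := hL.1.1 c.1 (hL.2 _ _ _ hj)
      simp [← this, hj] at h
    · have : i = c.1 := hL.1.2 c.2 (hL.2 _ _ _ hi)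
      simp [← this, hi] at h
  · exact Or.inl (by rw [hL.2 _ _ _ h, h])

theorem hallCond_of_completes (hL : Completes n P L) : HallCond n P := by
  intro T
  rw [card_eq_sum_card_fiberwise (f := fun c => L c.1 c.2) (t := univ) fun _ _ => mem_univ _]
  refine sum_le_sum fun σ _ => le_alpha (filter_subset _ _) (hL.1.indepCells_filter T σ) ?_
  intro c hc
  rw [← (mem_filter.1 hc).2]
  exact hL.supports c

lemma IsPLS.sum_card_missingRow (hP : IsPLS n P) (hshape : IsRectShape r s P) (hrn : r ≤ n)
    (hsn : s ≤ n) : ∑ τ, #{i ∈ firstIndices r | MissingRow P τ i} = r * (n - s) := by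
  refine (sum_card_bipartiteAbove_eq_sum_card_bipartiteBelow (s := firstIndices r) (t := univ)
    (fun i τ => MissingRow P τ i)).symm.trans ?_
  refine (sum_const_nat (m := n - s) fun i hi => ?_).trans (by rw [card_firstIndices hrn])
  exact hP.card_missingRow hshape hsn (mem_firstIndices.1 hi)

lemma alpha_firstIndices_prod_compl_le (hshape : IsRectShape r s P) (hsn : s ≤ n) (τ : Fin n) :
    alpha P τ (firstIndices r ×ˢ (firstIndices s)ᶜ) ≤ #{i ∈ firstIndices r | MissingRow P τ i} ∧
      alpha P τ (firstIndices r ×ˢ (firstIndices s)ᶜ) ≤ n - s := by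
  have hmem : ∀ c ∈ firstIndices r ×ˢ (firstIndices s)ᶜ, Supports P τ c →
      c.1 ∈ {i ∈ firstIndices r | MissingRow P τ i} ∧ c.2 ∈ (firstIndices s)ᶜ := by
    intro c hc hsupp
    obtain ⟨hr, hs⟩ := mem_product.1 hc
    have hempty : P c.1 c.2 = none := by
      by_contra h
      exact mem_compl.1 hs (mem_firstIndices.2 ((hshape _ _).1 h).2)
    have hmiss : MissingRow P τ c.1 := by
      rcases hsupp with h | h
      · simp [hempty] at h
      · exact h.2.1
    exact ⟨mem_filter.2 ⟨hr, hmiss⟩, hs⟩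
  constructor <;> refine alpha_le fun S hST hS hσ => ?_
  · exact hS.card_le_of_fst_mem fun c hc => (hmem c (hST hc) (hσ c hc)).1
  · have hcols : #(firstIndices (n := n) s)ᶜ = n - s := by
      rw [card_compl, card_firstIndices hsn, Fintype.card_fin]
    exact hcols ▸ hS.card_le_of_snd_mem fun c hc => (hmem c (hST hc) (hσ c hc)).2

theorem ryserCond_of_hallCond (hP : IsPLS n P) (hshape : IsRectShape r s P) (hrn : r ≤ n)
    (hsn : s ≤ n) (hH : HallCond n P) : RyserCond r s P := by
  rw [hP.ryserCond_iff hshape hrn hsn]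
  by_contra! ⟨σ, hσ⟩
  set T : Finset (Fin n × Fin n) := firstIndices r ×ˢ (firstIndices s)ᶜ
  have hT : #T = r * (n - s) := by
    rw [card_product, card_compl, card_firstIndices hrn, card_firstIndices hsn, Fintype.card_fin]
  have hlt : ∑ τ, alpha P τ T < ∑ τ, #{i ∈ firstIndices r | MissingRow P τ i} := by
    have hα := alpha_firstIndices_prod_compl_le hshape hsn (P := P)
    exact sum_lt_sum (fun τ _ => (hα τ).1) ⟨σ, mem_univ _, (hα σ).2.trans_lt hσ⟩
  have := hH T
  rw [hP.sum_card_missingRow hshape hrn hsn] at hlt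
  omega

end Hall

end PartialLatinSquare

theorem stmt7_general (n r s : ℕ) (hrn : r ≤ n) (hsn : s ≤ n)
    (P : Fin n → Fin n → Option (Fin n)) (hP : IsPLS n P)
    (hshape : ∀ i j : Fin n, P i j ≠ none ↔ (i.val < r ∧ j.val < s))
    (ν : Fin n → ℕ)
    (hν : ∀ σ, ν σ = (Finset.univ.filter
      (fun c : Fin n × Fin n => P c.1 c.2 = some σ)).card) :
    ((∃ L, Completes n P L) ↔ HallCond n P) ∧
      (HallCond n P ↔ ∀ σ : Fin n, r + s - n ≤ ν σ) := by
  have hRyser : (∀ σ : Fin n, r + s - n ≤ ν σ) ↔ RyserCond r s P :=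
    forall_congr' fun σ => by
      rw [hν σ]
      exact Nat.sub_le_iff_le_add'
  have hHall : HallCond n P → RyserCond r s P := ryserCond_of_hallCond hP hshape hrn hsn
  have hComplete : RyserCond r s P → ∃ L, Completes n P L :=
    fun h => exists_completes_of_ryserCond hP hshape h hrn hsn
  rw [hRyser]
  exact ⟨⟨fun ⟨_, hL⟩ => hallCond_of_completes hL, hComplete ∘ hHall⟩,
    ⟨hHall, fun h => (hComplete h).elim fun _ hL => hallCond_of_completes hL⟩⟩

theorem stmt7 (n r s : ℕ) (hr : 1 ≤ r) (hrn : r ≤ n) (hs : 1 ≤ s) (hsn : s ≤ n)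
    (P : Fin n → Fin n → Option (Fin n)) (hP : IsPLS n P)
    (hshape : ∀ i j : Fin n, P i j ≠ none ↔ (i.val < r ∧ j.val < s))
    (ν : Fin n → ℕ)
    (hν : ∀ σ, ν σ = (Finset.univ.filter
      (fun c : Fin n × Fin n => P c.1 c.2 = some σ)).card) :
    ((∃ L, Completes n P L) ↔ HallCond n P) ∧
      (HallCond n P ↔ ∀ σ : Fin n, r + s - n ≤ ν σ) :=
  stmt7_general n r s hrn hsn P hP hshape ν hν
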